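/- Let X be a finite metric space with distance d, let s : Finset X → ℝ be a non-negative monotone set function, λ > 0, n ≥ 1, α ∈ (0,1], and let ã := (1/2)·s + λ·div. Let x₀, …, x_{n−1} be pairwise distinct elements of X forming an α-approximate greedy sequence for the set function ã, with partial sets B_i and output B_n (so |B_i| = i). Let γ̂ ∈ (0,1] be a lower bound on the submodularity ratio γ_{B_n ∪ B*, n}(s), where B* ⊆ X is any set with |B*| = n. Then s(B_n) + λ·div(B_n) ≥ (α·γ̂/2)·(s(B*) + λ·div(B*)). -/

import Mathlib

open Finset

/-- `d(A,B) = Σ_{x∈A} Σ_{x'∈B} d(x,x')`. -/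
noncomputable def setDist {X : Type*} [MetricSpace X] (A B : Finset X) : ℝ :=
  ∑ x ∈ A, ∑ x' ∈ B, dist x x'

/-- Sum-dispersion `div(B) = (1/2)·d(B,B)`. -/
noncomputable def sumDisp {X : Type*} [MetricSpace X] (B : Finset X) : ℝ :=
  (1 / 2) * setDist B B

/-- Marginal gain `Δ_a(x ∣ B) = a(B ∪ {x}) − a(B)`. -/
noncomputable def margGain {X : Type*} [DecidableEq X] (a : Finset X → ℝ) (x : X)
    (B : Finset X) : ℝ :=
  a (insert x B) - a B

/-- The partial set `B_i = {x₀, …, x_{i−1}}` of a sequence `xs`. -/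
def partialSet {X : Type*} [DecidableEq X] {n : ℕ} (xs : Fin n → X) (i : ℕ) : Finset X :=
  (Finset.univ.filter (fun j : Fin n => (j : ℕ) < i)).image xs

/-!
At step `i` the greedy choice `x_i` beats, up to the factor `α`, the average marginal gain of the
`m_i ≥ 1` elements of `B* \ B_i`. By the submodularity ratio these gains add up to at least
`(γ/2)·(s(B*) - s(B_n)) + λ·d(B* \ B_i, B_i)`. Charging every pair of `B*` to hubs through the
triangle inequality `d(v, v') ≤ d(v, z) + d(v', z)` gives
`i·m_i·div(B*) ≤ n(n-1)·d(B* \ B_i, B_i)`. Summing over `i`, with `∑ i = n(n-1)/2` and the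
marginal gains telescoping, yields
`½ s(B_n) + λ div(B_n) ≥ (αγ/2)(s(B*) - s(B_n)) + (αλ/2) div(B*)`,
which rearranges to the claim. If `B* ⊆ B_n`, then `B* = B_n` and the claim is trivial.
-/

section Dispersion

variable {X : Type*} [MetricSpace X]

lemma setDist_nonneg (A B : Finset X) : 0 ≤ setDist A B :=
  sum_nonneg fun _ _ => sum_nonneg fun _ _ => dist_nonneg

lemma setDist_comm (A B : Finset X) : setDist A B = setDist B A := by
  rw [setDist, setDist, sum_comm]
  simp only [dist_comm]

lemma setDist_union_left [DecidableEq X] {A B : Finset X} (C : Finset X) (h : Disjoint A B) :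
    setDist (A ∪ B) C = setDist A C + setDist B C :=
  sum_union h

lemma setDist_union_right [DecidableEq X] (A : Finset X) {B C : Finset X} (h : Disjoint B C) :
    setDist A (B ∪ C) = setDist A B + setDist A C := by
  rw [setDist_comm, setDist_union_left A h, setDist_comm B, setDist_comm C]

lemma sum_setDist_singleton (A B : Finset X) : ∑ x ∈ A, setDist {x} B = setDist A B := by
  simp only [setDist, sum_singleton]

lemma setDist_self_eq_zero_of_card_le_one {A : Finset X} (h : A.card ≤ 1) : setDist A A = 0 :=
  sum_eq_zero fun x hx => sum_eq_zero fun y hy => dist_eq_zero.2 (card_le_one.1 h x hx y hy)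

lemma sumDisp_nonneg (A : Finset X) : 0 ≤ sumDisp A :=
  mul_nonneg (by norm_num) (setDist_nonneg A A)

lemma sumDisp_eq_zero_of_card_le_one {A : Finset X} (h : A.card ≤ 1) : sumDisp A = 0 := by
  rw [sumDisp, setDist_self_eq_zero_of_card_le_one h, mul_zero]

lemma sumDisp_empty : sumDisp (∅ : Finset X) = 0 :=
  sumDisp_eq_zero_of_card_le_one (card_empty.trans_le zero_le_one)

lemma sumDisp_insert [DecidableEq X] {x : X} {A : Finset X} (hx : x ∉ A) :
    sumDisp (insert x A) = sumDisp A + setDist {x} A := by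
  have hdisj : Disjoint {x} A := disjoint_singleton_left.2 hx
  rw [sumDisp, sumDisp, insert_eq, setDist_union_left _ hdisj, setDist_union_right _ hdisj,
    setDist_union_right _ hdisj, setDist_comm A {x}, setDist_self_eq_zero_of_card_le_one
      (card_singleton x).le]
  ring

-- Every `z ∈ B` is a hub for the pairs of `A`: `d(v, v') ≤ d(v, z) + d(v', z)`.
lemma card_mul_setDist_self_le (A B : Finset X) :
    (B.card : ℝ) * setDist A A ≤ 2 * ((A.card : ℝ) - 1) * setDist A B := by
  classical
  set hub : X → ℝ := fun v => ∑ z ∈ B, dist v z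
  have hpairs : setDist A A = ∑ v ∈ A, ∑ v' ∈ A.erase v, dist v v' :=
    sum_congr rfl fun v hv => by rw [sum_erase_eq_sub hv, dist_self, sub_zero]
  have hrow : ∀ v ∈ A, ∑ v' ∈ A.erase v, (hub v + hub v') =
      ((A.card : ℝ) - 1) * hub v + (setDist A B - hub v) := by
    intro v hv
    rw [sum_add_distrib, sum_const, card_erase_of_mem hv, nsmul_eq_mul,
      Nat.cast_pred (card_pos.2 ⟨v, hv⟩), sum_erase_eq_sub hv]
    rfl
  calc (B.card : ℝ) * setDist A A
      ≤ ∑ v ∈ A, ∑ v' ∈ A.erase v, (hub v + hub v') := by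
        rw [hpairs, mul_sum]
        refine sum_le_sum fun v _ => ?_
        rw [mul_sum]
        refine sum_le_sum fun v' _ => ?_
        rw [← nsmul_eq_mul, ← sum_const, ← sum_add_distrib]
        exact sum_le_sum fun z _ => dist_triangle_right v v' z
    _ = 2 * ((A.card : ℝ) - 1) * setDist A B := by
        rw [sum_congr rfl hrow, sum_add_distrib, ← mul_sum, sum_sub_distrib, sum_const,
          nsmul_eq_mul, show ∑ v ∈ A, hub v = setDist A B from rfl]
        ring

-- Hubs in `J` and `K`, weighted by `|S| + |K|` and `|S| - |J|`, so that the weights of the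
-- pairs of `S` add up to `|S| (|J| + |K|)`.
lemma card_add_card_mul_setDist_self_le {S J K : Finset X} (hS : S.Nonempty)
    (hJS : J.card ≤ S.card) :
    ((J.card : ℝ) + K.card) * S.card * setDist S S ≤
      2 * ((S.card : ℝ) + K.card - 1) *
        ((S.card + K.card) * setDist S J + (S.card - J.card) * setDist S K) := by
  have hm : (1 : ℝ) ≤ S.card := by exact_mod_cast card_pos.2 hS
  have hk : (0 : ℝ) ≤ K.card := K.card.cast_nonneg
  have hjm : (J.card : ℝ) ≤ S.card := by exact_mod_cast hJS
  rcases le_or_gt S.card 1 with hS1 | hS2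
  · rw [setDist_self_eq_zero_of_card_le_one hS1, mul_zero]
    have := setDist_nonneg S J
    have := setDist_nonneg S K
    have : (0 : ℝ) ≤ S.card - J.card := by linarith
    have : (0 : ℝ) ≤ S.card + K.card - 1 := by linarith
    positivity
  have hm1 : (0 : ℝ) < S.card - 1 := by
    have : (2 : ℝ) ≤ S.card := by exact_mod_cast hS2
    linarith
  have hJ := card_mul_setDist_self_le S J
  have hK := card_mul_setDist_self_le S K
  refine le_of_mul_le_mul_left ?_ hm1
  calc ((S.card : ℝ) - 1) * ((J.card + K.card) * S.card * setDist S S)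
      ≤ (S.card + K.card - 1) * ((J.card + K.card) * S.card * setDist S S) := by
        gcongr
        · have := setDist_nonneg S S
          positivity
        · linarith
    _ = (S.card + K.card - 1) * ((S.card + K.card) * (J.card * setDist S S) +
          (S.card - J.card) * (K.card * setDist S S)) := by ring
    _ ≤ (S.card + K.card - 1) * ((S.card + K.card) * (2 * (S.card - 1) * setDist S J) +
          (S.card - J.card) * (2 * (S.card - 1) * setDist S K)) := by
        gcongr
        linarith
    _ = _ := by ring

-- Write `O = S ∪ K`, `G = J ∪ K` with `S = O \ G`, `K = O ∩ G`, `J = G \ O`: the pairs of `S`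
-- are charged to hubs in `J` and `K`, the pairs of `K` to hubs in `S`.
lemma card_mul_card_sdiff_mul_sumDisp_le [DecidableEq X] {O G : Finset X} (hGO : G.card ≤ O.card)
    (hne : (O \ G).Nonempty) :
    (G.card : ℝ) * (O \ G).card * sumDisp O ≤
      O.card * ((O.card : ℝ) - 1) * setDist (O \ G) G := by
  set S := O \ G
  set K := O ∩ G
  set J := G \ O
  have hKG : G ∩ O = K := inter_comm G O
  have hOcard : S.card + K.card = O.card := card_sdiff_add_card_inter O G
  have hGcard : J.card + K.card = G.card := hKG ▸ card_sdiff_add_card_inter G O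
  have hJS : J.card ≤ S.card := by omega
  have hO : (O.card : ℝ) = S.card + K.card := by exact_mod_cast hOcard.symm
  have hG : (G.card : ℝ) = J.card + K.card := by exact_mod_cast hGcard.symm
  have hOO : setDist O O = setDist S S + setDist K K + 2 * setDist S K := by
    conv_lhs => rw [← sdiff_union_inter O G]
    rw [setDist_union_left _ (disjoint_sdiff_inter O G), setDist_union_right _
      (disjoint_sdiff_inter O G), setDist_union_right _ (disjoint_sdiff_inter O G),
      setDist_comm K S]
    ring
  have hSG : setDist S G = setDist S J + setDist S K := by
    conv_lhs => rw [← sdiff_union_inter G O]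
    rw [setDist_union_right _ (disjoint_sdiff_inter G O), hKG]
  have hSS := card_add_card_mul_setDist_self_le (K := K) hne hJS
  have hKK := card_mul_setDist_self_le K S
  rw [setDist_comm K S] at hKK
  rw [sumDisp, hOO, hSG, hO, hG]
  linear_combination (1 / 2 : ℝ) * hSS + (1 / 2 : ℝ) * (J.card + K.card : ℝ) * hKK

end Dispersion

section PartialSet

variable {X : Type*} [DecidableEq X] {n : ℕ} (xs : Fin n → X)

lemma partialSet_zero : partialSet xs 0 = ∅ := by
  simp [partialSet]

lemma partialSet_succ (i : Fin n) : partialSet xs (i + 1) = insert (xs i) (partialSet xs i) := by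
  rw [partialSet, partialSet, ← image_insert]
  congr 1
  ext j
  simp only [mem_filter, mem_univ, true_and, mem_insert, Fin.ext_iff]
  omega

lemma partialSet_mono {i j : ℕ} (h : i ≤ j) : partialSet xs i ⊆ partialSet xs j :=
  image_subset_image (monotone_filter_right _ fun _ _ hk => hk.trans_le h)

variable {xs}

lemma card_partialSet (hxs : Function.Injective xs) {i : ℕ} (hi : i ≤ n) :
    (partialSet xs i).card = i := by
  rw [partialSet, card_image_of_injective _ hxs, Fin.card_filter_val_lt, min_eq_right hi]

variable (xs)

lemma sum_margGain_partialSet (a : Finset X → ℝ) :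
    ∑ i : Fin n, margGain a (xs i) (partialSet xs i) = a (partialSet xs n) - a ∅ := by
  rw [← partialSet_zero xs, ← sum_range_sub (fun i => a (partialSet xs i)),
    ← Fin.sum_univ_eq_sum_range]
  simp only [margGain, partialSet_succ]

end PartialSet

section SetFunction

variable {X : Type*} [DecidableEq X]

lemma monotone_of_margGain_nonneg {s : Finset X → ℝ} (hs : ∀ B x, 0 ≤ margGain s x B) :
    Monotone s :=
  monotone_iff_forall_le_insert.2 fun B x _ => sub_nonneg.1 (hs B x)

variable [MetricSpace X]

lemma margGain_half_add_sumDisp (s : Finset X → ℝ) (lam : ℝ) {x : X} {B : Finset X}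
    (hx : x ∉ B) :
    margGain (fun C => (1 / 2) * s C + lam * sumDisp C) x B =
      (1 / 2) * margGain s x B + lam * setDist {x} B := by
  simp only [margGain, sumDisp_insert hx]
  ring

lemma sum_margGain_half_add_sumDisp (s : Finset X → ℝ) (lam : ℝ) {S B : Finset X}
    (h : Disjoint S B) :
    ∑ x ∈ S, margGain (fun C => (1 / 2) * s C + lam * sumDisp C) x B =
      (1 / 2) * ∑ x ∈ S, margGain s x B + lam * setDist S B := by
  rw [sum_congr rfl fun x hx => margGain_half_add_sumDisp s lam (disjoint_left.1 h hx),
    sum_add_distrib, ← mul_sum, ← mul_sum, sum_setDist_singleton]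

end SetFunction

lemma sum_fin_val_cast (n : ℕ) : ∑ i : Fin n, (i : ℝ) = n * (n - 1) / 2 := by
  induction n with
  | zero => simp
  | succ n ih =>
    rw [Fin.sum_univ_castSucc]
    simp only [Fin.val_castSucc, Fin.val_last, ih]
    push_cast
    ring

section Greedy

variable {X : Type*} [MetricSpace X] [DecidableEq X]

lemma greedy_step_bound {s : Finset X → ℝ} (hs : Monotone s) {lam α γ : ℝ} (hα : 0 ≤ α)
    (hγ : 0 ≤ γ) {G B O : Finset X} {y : X} (hGB : G ⊆ B) (hne : (O \ G).Nonempty)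
    (hgreedy : ∀ x ∉ G, α * margGain (fun C => (1 / 2) * s C + lam * sumDisp C) x G ≤
      margGain (fun C => (1 / 2) * s C + lam * sumDisp C) y G)
    (hratio : γ * (s (G ∪ (O \ G)) - s G) ≤ ∑ x ∈ O \ G, margGain s x G) :
    α * γ / 2 * ((s O - s B) / O.card) + α * lam * (setDist (O \ G) G / (O \ G).card) ≤
      margGain (fun C => (1 / 2) * s C + lam * sumDisp C) y G := by
  set T : Finset X → ℝ := fun C => (1 / 2) * s C + lam * sumDisp C
  set S := O \ G
  have hm : (0 : ℝ) < S.card := by exact_mod_cast hne.card_pos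
  rw [union_sdiff_self_eq_union] at hratio
  have havg : α * (γ / 2 * (s (G ∪ O) - s G) + lam * setDist S G) ≤ S.card * margGain T y G :=
    calc α * (γ / 2 * (s (G ∪ O) - s G) + lam * setDist S G)
        ≤ α * ((1 / 2) * ∑ x ∈ S, margGain s x G + lam * setDist S G) :=
          mul_le_mul_of_nonneg_left (by linarith) hα
      _ = ∑ x ∈ S, α * margGain T x G := by
        rw [← mul_sum, sum_margGain_half_add_sumDisp s lam sdiff_disjoint]
      _ ≤ ∑ _x ∈ S, margGain T y G := sum_le_sum fun x hx => hgreedy x (mem_sdiff.1 hx).2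
      _ = S.card * margGain T y G := by rw [sum_const, nsmul_eq_mul]
  have hgain : (s O - s B) / O.card ≤ (s (G ∪ O) - s G) / S.card :=
    calc (s O - s B) / O.card ≤ (s (G ∪ O) - s G) / O.card :=
          div_le_div_of_nonneg_right (sub_le_sub (hs subset_union_right) (hs hGB))
            (Nat.cast_nonneg _)
      _ ≤ (s (G ∪ O) - s G) / S.card :=
          div_le_div_of_nonneg_left (sub_nonneg.2 (hs subset_union_left)) hm
            (by exact_mod_cast card_le_card sdiff_subset)
  calc α * γ / 2 * ((s O - s B) / O.card) + α * lam * (setDist S G / S.card)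
      ≤ α * γ / 2 * ((s (G ∪ O) - s G) / S.card) + α * lam * (setDist S G / S.card) := by
        gcongr
    _ = α * (γ / 2 * (s (G ∪ O) - s G) + lam * setDist S G) / S.card := by ring
    _ ≤ margGain T y G := (div_le_iff₀ hm).2 (by linarith)

variable {n : ℕ} {xs : Fin n → X}

lemma sumDisp_le_two_mul_sum_setDist_div_card (hxs : Function.Injective xs) {O : Finset X}
    (hO : O.card = n) (hne : (O \ partialSet xs n).Nonempty) :
    sumDisp O ≤ 2 * ∑ i : Fin n,
      setDist (O \ partialSet xs i) (partialSet xs i) / (O \ partialSet xs i).card := by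
  have hsum_nonneg : 0 ≤ ∑ i : Fin n,
      setDist (O \ partialSet xs i) (partialSet xs i) / (O \ partialSet xs i).card :=
    sum_nonneg fun i _ => div_nonneg (setDist_nonneg _ _) (Nat.cast_nonneg _)
  rcases le_or_gt n 1 with hn1 | hn2
  · rw [sumDisp_eq_zero_of_card_le_one (hO ▸ hn1)]
    linarith
  have hn2' : (2 : ℝ) ≤ n := by exact_mod_cast hn2
  have hpairs : (0 : ℝ) < n * (n - 1) := by nlinarith
  have hstep : ∀ i : Fin n, (i : ℝ) * sumDisp O / (n * (n - 1)) ≤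
      setDist (O \ partialSet xs i) (partialSet xs i) / (O \ partialSet xs i).card := by
    intro i
    have hSi : (O \ partialSet xs i).Nonempty :=
      hne.mono (sdiff_subset_sdiff subset_rfl (partialSet_mono xs i.is_lt.le))
    have hcore := card_mul_card_sdiff_mul_sumDisp_le
      (by rw [card_partialSet hxs i.is_lt.le, hO]; exact i.is_lt.le) hSi
    rw [card_partialSet hxs i.is_lt.le, hO] at hcore
    rw [div_le_div_iff₀ hpairs (by exact_mod_cast hSi.card_pos)]
    linarith
  calc sumDisp O = 2 * ∑ i : Fin n, (i : ℝ) * sumDisp O / (n * (n - 1)) := by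
        have : (n : ℝ) - 1 ≠ 0 := by linarith
        rw [← sum_div, ← sum_mul, sum_fin_val_cast]
        field_simp
    _ ≤ _ := mul_le_mul_of_nonneg_left (sum_le_sum fun i _ => hstep i) zero_le_two

lemma approx_greedy_gain_bound {s : Finset X → ℝ} (hs : Monotone s) {lam α γ : ℝ}
    (hlam : 0 ≤ lam) (hα : 0 ≤ α) (hγ0 : 0 ≤ γ) (hxs : Function.Injective xs)
    (hgreedy : ∀ i : Fin n, ∀ x : X, x ∉ partialSet xs i →
      α * margGain (fun C => (1 / 2) * s C + lam * sumDisp C) x (partialSet xs i) ≤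
        margGain (fun C => (1 / 2) * s C + lam * sumDisp C) (xs i) (partialSet xs i))
    {O : Finset X} (hO : O.card = n) (hne : (O \ partialSet xs n).Nonempty)
    (hγ : ∀ S : Finset X, S.card ≤ n → ∀ B' ⊆ (partialSet xs n ∪ O) \ S,
      γ * (s (B' ∪ S) - s B') ≤ ∑ x ∈ S, margGain s x B') :
    α * γ / 2 * (s O - s (partialSet xs n)) + α * lam / 2 * sumDisp O ≤
      (1 / 2) * s (partialSet xs n) + lam * sumDisp (partialSet xs n) - (1 / 2) * s ∅ := by
  have hGB (i : Fin n) : partialSet xs i ⊆ partialSet xs n := partialSet_mono xs i.is_lt.le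
  have hstep (i : Fin n) := greedy_step_bound hs hα hγ0 (hGB i)
    (hne.mono (sdiff_subset_sdiff subset_rfl (hGB i))) (hgreedy i)
    (hγ _ ((card_le_card sdiff_subset).trans hO.le) _ fun x hx =>
      mem_sdiff.2 ⟨mem_union_left _ (hGB i hx), fun h => (mem_sdiff.1 h).2 hx⟩)
  have hsum := sum_le_sum fun i (_ : i ∈ univ) => hstep i
  rw [sum_margGain_partialSet, sum_add_distrib, sum_const, card_univ, Fintype.card_fin,
    nsmul_eq_mul, ← mul_sum, hO, sumDisp_empty] at hsum
  have hn : (n : ℝ) ≠ 0 := by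
    rw [← hO]
    exact_mod_cast (hne.mono sdiff_subset).card_pos.ne'
  have hdisp := mul_le_mul_of_nonneg_left (sumDisp_le_two_mul_sum_setDist_div_card hxs hO hne)
    (mul_nonneg hα hlam)
  field_simp at hsum
  linarith

end Greedy

theorem approx_greedy_diversified_near_submodular_bound_general
    {X : Type*} [MetricSpace X] [DecidableEq X]
    (s : Finset X → ℝ)
    (hs_nonneg : ∀ B : Finset X, 0 ≤ s B)
    (hs_mono : ∀ (B : Finset X) (x : X), 0 ≤ margGain s x B)
    (lam : ℝ) (hlam : 0 < lam)
    (n : ℕ)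
    (α : ℝ) (hα0 : 0 < α) (hα1 : α ≤ 1)
    (xs : Fin n → X) (hxs : Function.Injective xs)
    (hgreedy : ∀ i : Fin n, ∀ x : X, x ∉ partialSet xs i →
      α * margGain (fun C => (1 / 2) * s C + lam * sumDisp C) x (partialSet xs i) ≤
        margGain (fun C => (1 / 2) * s C + lam * sumDisp C) (xs i) (partialSet xs i))
    (Bstar : Finset X) (hBstar : Bstar.card = n)
    (γ : ℝ) (hγ0 : 0 < γ) (hγ1 : γ ≤ 1)
    (hγ : ∀ S : Finset X, S.card ≤ n → ∀ B' ⊆ (partialSet xs n ∪ Bstar) \ S,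
      γ * (s (B' ∪ S) - s B') ≤ ∑ x ∈ S, margGain s x B') :
    (α * γ / 2) * (s Bstar + lam * sumDisp Bstar) ≤
      s (partialSet xs n) + lam * sumDisp (partialSet xs n) := by
  have hαγ : α * γ ≤ 1 := mul_le_one₀ hα1 hγ0.le hγ1
  by_cases hOB : Bstar ⊆ partialSet xs n
  · rw [eq_of_subset_of_card_le hOB (by rw [hBstar, card_partialSet hxs le_rfl])]
    exact mul_le_of_le_one_left (add_nonneg (hs_nonneg _) (mul_nonneg hlam.le (sumDisp_nonneg _)))
      (by linarith)
  have hgain := approx_greedy_gain_bound (monotone_of_margGain_nonneg hs_mono) hlam.le hα0.le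
    hγ0.le hxs hgreedy hBstar (sdiff_nonempty.2 hOB) hγ
  nlinarith [hs_nonneg ∅, mul_nonneg (sub_nonneg.2 hαγ) (hs_nonneg (partialSet xs n)),
    mul_nonneg (mul_nonneg (mul_nonneg hα0.le hlam.le) (sub_nonneg.2 hγ1)) (sumDisp_nonneg Bstar)]

/-- diversified-subset-selection guarantee for near-submodular
`s`: running the α-approximate greedy algorithm on `ã = (1/2)·s + λ·div`
returns `B_n` with `s(B_n) + λ·div(B_n) ≥ (α·γ̂/2)·(s(B*) + λ·div(B*))`. -/
theorem approx_greedy_diversified_near_submodular_bound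
    {X : Type*} [Fintype X] [MetricSpace X] [DecidableEq X]
    (s : Finset X → ℝ)
    (hs_nonneg : ∀ B : Finset X, 0 ≤ s B)
    (hs_mono : ∀ (B : Finset X) (x : X), 0 ≤ margGain s x B)
    (lam : ℝ) (hlam : 0 < lam)
    (n : ℕ) (hn : 1 ≤ n)
    (α : ℝ) (hα0 : 0 < α) (hα1 : α ≤ 1)
    (xs : Fin n → X) (hxs : Function.Injective xs)
    (hgreedy : ∀ i : Fin n, ∀ x : X, x ∉ partialSet xs i →
      α * margGain (fun C => (1 / 2) * s C + lam * sumDisp C) x (partialSet xs i) ≤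
        margGain (fun C => (1 / 2) * s C + lam * sumDisp C) (xs i) (partialSet xs i))
    (Bstar : Finset X) (hBstar : Bstar.card = n)
    (γ : ℝ) (hγ0 : 0 < γ) (hγ1 : γ ≤ 1)
    (hγ : ∀ S : Finset X, S.card ≤ n → ∀ B' ⊆ (partialSet xs n ∪ Bstar) \ S,
      γ * (s (B' ∪ S) - s B') ≤ ∑ x ∈ S, margGain s x B') :
    (α * γ / 2) * (s Bstar + lam * sumDisp Bstar) ≤
      s (partialSet xs n) + lam * sumDisp (partialSet xs n) :=
  approx_greedy_diversified_near_submodular_bound_general s hs_nonneg hs_mono lam hlam n α hα0 hα1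
    xs hxs hgreedy Bstar hBstar γ hγ0 hγ1 hγ
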